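/- arXiv:2106.12222 — 2 statements merged into one kernel-verified Lean document; each statement's English description precedes it below -/
import Mathlib

section
/- Let $V$ be a finite-dimensional complex inner product space, let $U$ be a unitary operator on $V$, let $q$ be a positive integer, and let $\omega \in \mathbb{C}$ be a primitive $q$-th root of unity. Suppose there exists a unitary operator $T$ on $V$ with $T U T^{-1} = \omega U$. Then $q$ divides $\dim_{\mathbb{C}} V$. -/
/-! Taking determinants in `T U T⁻¹ = ω U` gives `det U = ω ^ n * det U` with `n = dim V`;
since `det U` is a unit, `ω ^ n = 1`, and primitivity of `ω` turns this into `q ∣ n`. -/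

theorem LinearEquiv.pow_finrank_eq_one_of_conj_eq_smul {R M : Type*} [CommRing R]
    [AddCommGroup M] [Module R M] [Module.Free R M] (e f : M ≃ₗ[R] M) {c : R}
    (h : e.conj (f : M →ₗ[R] M) = c • (f : M →ₗ[R] M)) :
    c ^ Module.finrank R M = 1 := by
  have hdet : c ^ Module.finrank R M * LinearMap.det (f : M →ₗ[R] M) =
      LinearMap.det (f : M →ₗ[R] M) := by
    rw [← LinearMap.det_smul, ← h, LinearEquiv.conj_apply, LinearMap.comp_assoc,
      LinearMap.det_conj]
  exact f.isUnit_det'.mul_eq_right.mp hdet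

theorem primitive_root_conjugation_divides_dim_general
    {V : Type*} [NormedAddCommGroup V] [InnerProductSpace ℂ V]
    (U : V ≃ₗᵢ[ℂ] V) (q : ℕ) (ω : ℂ) (hω : IsPrimitiveRoot ω q)
    (hT : ∃ T : V ≃ₗᵢ[ℂ] V, ∀ v : V, T (U (T.symm v)) = ω • U v) :
    q ∣ Module.finrank ℂ V := by
  obtain ⟨T, hT⟩ := hT
  refine hω.dvd_of_pow_eq_one _ <|
    T.toLinearEquiv.pow_finrank_eq_one_of_conj_eq_smul U.toLinearEquiv ?_
  ext v
  simpa [LinearEquiv.conj_apply] using hT v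

/-- if `U` is a unitary operator on a finite-dimensional complex
inner product space `V`, `ω` is a primitive `q`-th root of unity, and there is a
unitary `T` with `T U T⁻¹ = ω U`, then `q` divides `dim_ℂ V`. -/
theorem primitive_root_conjugation_divides_dim
    {V : Type*} [NormedAddCommGroup V] [InnerProductSpace ℂ V]
    [FiniteDimensional ℂ V]
    (U : V ≃ₗᵢ[ℂ] V) (q : ℕ) (hq : 0 < q) (ω : ℂ) (hω : IsPrimitiveRoot ω q)
    (hT : ∃ T : V ≃ₗᵢ[ℂ] V, ∀ v : V, T (U (T.symm v)) = ω • U v) :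
    q ∣ Module.finrank ℂ V :=
  primitive_root_conjugation_divides_dim_general U q ω hω hT
end

section
/- Let $L_x, L_y$ be positive integers. Then there exist functions $a_x, a_y : (\mathbb{Z}/L_x\mathbb{Z}) \times (\mathbb{Z}/L_y\mathbb{Z}) \to \mathbb{C}$ taking values in the unit circle $\{z \in \mathbb{C} : |z| = 1\}$ such that for every site $v = (x, y)$ the plaquette phase satisfies $a_x(x,y)\, a_y(x+1,y)\, \overline{a_x(x,y+1)}\, \overline{a_y(x,y)} = e^{2\pi i /(L_x L_y)}$. -/
/-!
With `N = Lx * Ly` and `ζ = e^{2πi/N}`, take phases `ζ ^ θ` for integer angles `θ`. Putting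
`θ = x.val` on the vertical edges gives every plaquette flux `1` (in units of `2π/N`), except in
the last column, where the wrap-around `x.val ↦ 0` costs `Lx`. Compensating with
`θ = -Lx * y.val` on the horizontal edges of the last column leaves a single plaquette, at
`(-1, -1)`, with flux `1 - N`, and `ζ ^ N = 1` makes that defect invisible.
-/

open Real

namespace ZMod

variable {n : ℕ} [NeZero n]

theorem val_add_one_eq (x : ZMod n) : (x + 1).val = (x.val + 1) % n := by
  conv_lhs => rw [← natCast_zmod_val x]
  rw [← Nat.cast_succ, val_natCast]

theorem eq_neg_one_iff_val_add_one_eq (x : ZMod n) : x = -1 ↔ x.val + 1 = n := by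
  have hlt := x.val_lt
  rw [eq_neg_iff_add_eq_zero, ← val_eq_zero, val_add_one_eq, ← Nat.dvd_iff_mod_eq_zero]
  exact ⟨fun h => ((Nat.le_of_dvd x.val.succ_pos h).antisymm hlt).symm, fun h => by rw [h]⟩

theorem intCast_val_add_one (x : ZMod n) :
    ((x + 1).val : ℤ) = x.val + 1 - if x = -1 then (n : ℤ) else 0 := by
  have hlt := x.val_lt
  simp only [val_add_one_eq, eq_neg_one_iff_val_add_one_eq]
  split_ifs with h
  · rw [h, Nat.mod_self]; omega
  · rw [Nat.mod_eq_of_lt (by omega)]; simp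

end ZMod

def stringAngleX (m n : ℕ) (v : ZMod m × ZMod n) : ℤ :=
  if v.1 = -1 then -(m * v.2.val) else 0

def stringAngleY (m n : ℕ) (v : ZMod m × ZMod n) : ℤ :=
  v.1.val

theorem stringAngle_curl {m n : ℕ} [NeZero m] [NeZero n] (x : ZMod m) (y : ZMod n) :
    stringAngleX m n (x, y) + stringAngleY m n (x + 1, y)
      - stringAngleX m n (x, y + 1) - stringAngleY m n (x, y)
      = 1 - if x = -1 ∧ y = -1 then (m * n : ℤ) else 0 := by
  simp only [stringAngleX, stringAngleY, x.intCast_val_add_one, y.intCast_val_add_one]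
  by_cases hx : x = -1 <;> by_cases hy : y = -1 <;> simp [hx, hy] <;> ring

theorem exists_uniform_plaquette {G : Type*} [CommGroup G] {m n : ℕ} [NeZero m] [NeZero n]
    (g : G) (hg : g ^ (m * n) = 1) :
    ∃ Ax Ay : ZMod m × ZMod n → G, ∀ x y,
      Ax (x, y) * Ay (x + 1, y) * (Ax (x, y + 1))⁻¹ * (Ay (x, y))⁻¹ = g := by
  refine ⟨fun v => g ^ stringAngleX m n v, fun v => g ^ stringAngleY m n v, fun x y => ?_⟩
  have hg' : g ^ ((m * n : ℕ) : ℤ) = 1 := by rw [zpow_natCast, hg]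
  simp only [← zpow_neg, ← zpow_add, ← sub_eq_add_neg, stringAngle_curl]
  split_ifs
  · rw [zpow_sub, zpow_one, ← Nat.cast_mul, hg', inv_one, mul_one]
  · simp

/-- existence of the string gauge: on the discrete torus
`(ℤ/Lₓ) × (ℤ/Lᵧ)` there exist unit-modulus edge phases `aₓ, aᵧ` whose oriented
product around every plaquette equals `e^{2πi/(Lₓ Lᵧ)}`, i.e. a `U(1)` gauge
field with uniform flux `2π/(Lₓ Lᵧ)` per plaquette and total flux `2π`. -/
theorem exists_string_gauge (Lx Ly : ℕ) (hLx : 0 < Lx) (hLy : 0 < Ly) :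
    ∃ ax ay : (ZMod Lx × ZMod Ly) → ℂ,
      (∀ v, ‖ax v‖ = 1 ∧ ‖ay v‖ = 1) ∧
      ∀ x : ZMod Lx, ∀ y : ZMod Ly,
        ax (x, y) * ay (x + 1, y) * star (ax (x, y + 1)) * star (ay (x, y))
          = Complex.exp (2 * Real.pi * Complex.I / (Lx * Ly)) := by
  have : NeZero Lx := NeZero.of_pos hLx
  have : NeZero Ly := NeZero.of_pos hLy
  have hN : (Lx * Ly : ℝ) ≠ 0 := by positivity
  have hflux : Circle.exp (2 * π / (Lx * Ly)) ^ (Lx * Ly) = 1 := by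
    rw [← Circle.exp_nsmul, nsmul_eq_mul, Nat.cast_mul, mul_div_cancel₀ _ hN, Circle.exp_two_pi]
  obtain ⟨Ax, Ay, hA⟩ := exists_uniform_plaquette _ hflux
  refine ⟨fun v => Ax v, fun v => Ay v, fun v => ⟨(Ax v).norm_coe, (Ay v).norm_coe⟩, fun x y => ?_⟩
  have hplaquette := congrArg ((↑) : Circle → ℂ) (hA x y)
  simp only [Circle.coe_mul, Circle.coe_inv_eq_conj, Circle.coe_exp] at hplaquette
  rw [Complex.star_def, hplaquette]
  congr 1
  push_cast
  ring
end
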